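/- arXiv:1902.07274 — 3 statements merged into one kernel-verified Lean document; each statement's English description precedes it below -/
import Mathlib

section
/- Suppose χ : ℝ → ℝ is differentiable at 1 with χ(1) = 1, and let f be smooth with f'(x₀) ≠ 0. Define r(Δx) = (f(x₀)−f(x₀−Δx))/(f(x₀+Δx)−f(x₀)) and ω₀(Δx) = 1/3 + (2/3)(1 − χ(r(Δx))). Then ω₀(Δx) = 1/3 + O(Δx) and ω₁(Δx) = 1 − ω₀(Δx) = 2/3 + O(Δx) as Δx → 0⁺. -/
open Asymptotics Filter

/-- Second-order Taylor bound for a smooth function. -/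
lemma taylor2_isBigO (f : ℝ → ℝ) (hf : ContDiff ℝ (⊤ : ℕ∞) f) (a : ℝ) :
    (fun t : ℝ => f (a + t) - f a - deriv f a * t) =O[nhds 0] fun t : ℝ => t ^ 2 := by
  have hfd : Differentiable ℝ f := hf.differentiable (by simp)
  have hgd : Differentiable ℝ (deriv f) :=
    (contDiff_infty_iff_deriv.mp (hf.of_le (by simp))).2.differentiable (by simp)
  -- derivative of deriv f at a gives a local Lipschitz-type bound
  have hg : (fun s : ℝ => deriv f (a + s) - deriv f a) =O[nhds 0] fun s : ℝ => s := by
    have h1 : (fun y : ℝ => deriv f y - deriv f a) =O[nhds a] fun y => y - a :=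
      (hgd a).isBigO_sub
    have h2 : Filter.Tendsto (fun s : ℝ => a + s) (nhds 0) (nhds a) := by
      have : Filter.Tendsto (fun s : ℝ => a + s) (nhds 0) (nhds (a + 0)) :=
        tendsto_const_nhds.add tendsto_id
      simpa using this
    simpa [Function.comp_def] using h1.comp_tendsto h2
  obtain ⟨C, hC⟩ := hg.bound
  rw [Metric.eventually_nhds_iff] at hC
  obtain ⟨ε, hε, hCε⟩ := hC
  rw [isBigO_iff]
  refine ⟨|C|, ?_⟩
  rw [Metric.eventually_nhds_iff]
  refine ⟨ε, hε, fun t ht => ?_⟩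
  simp only [dist_zero_right, Real.norm_eq_abs] at ht
  set h : ℝ → ℝ := fun s => f (a + s) - f a - deriv f a * s with hh
  have hderiv : ∀ s : ℝ, HasDerivAt h (deriv f (a + s) - deriv f a) s := by
    intro s
    have h1 : HasDerivAt (fun t : ℝ => f (a + t)) (deriv f (a + s)) s := by
      have := ((hfd (a + s)).hasDerivAt).comp s ((hasDerivAt_id s).const_add a)
      rw [mul_one] at this
      exact this
    have h2 := (hasDerivAt_id s).const_mul (deriv f a)
    rw [mul_one] at h2
    exact (h1.sub_const (f a)).sub h2
  have key : ‖h t - h 0‖ ≤ (|C| * |t|) * ‖t - 0‖ := by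
    apply Convex.norm_image_sub_le_of_norm_hasDerivWithin_le
      (f' := fun s => deriv f (a + s) - deriv f a)
      (s := Set.Icc (-|t|) (|t|))
    · intro x hx
      exact (hderiv x).hasDerivWithinAt
    · intro x hx
      have hxle : |x| ≤ |t| := abs_le.mpr ⟨hx.1, hx.2⟩
      have hxε : dist x (0:ℝ) < ε := by
        simp only [dist_zero_right, Real.norm_eq_abs]
        exact lt_of_le_of_lt hxle ht
      have := hCε hxε
      simp only [Real.norm_eq_abs] at this ⊢
      calc |deriv f (a + x) - deriv f a| ≤ C * |x| := this
        _ ≤ |C| * |x| := by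
            apply mul_le_mul_of_nonneg_right (le_abs_self C) (abs_nonneg x)
        _ ≤ |C| * |t| := by
            apply mul_le_mul_of_nonneg_left hxle (abs_nonneg C)
    · exact convex_Icc _ _
    · constructor <;> simp
    · constructor
      · exact neg_abs_le t
      · exact le_abs_self t
  have h0 : h 0 = 0 := by simp [hh]
  rw [h0, sub_zero, sub_zero] at key
  calc ‖h t‖ ≤ (|C| * |t|) * ‖t‖ := key
    _ = |C| * ‖t ^ 2‖ := by
        simp only [Real.norm_eq_abs, abs_pow]
        ring

theorem weights_converge_to_ideal (χ : ℝ → ℝ) (hχd : DifferentiableAt ℝ χ 1)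
    (hχ1 : χ 1 = 1) (f : ℝ → ℝ) (hf : ContDiff ℝ (⊤ : ℕ∞) f) (x₀ : ℝ)
    (hf' : deriv f x₀ ≠ 0) :
    (fun Δx : ℝ =>
        (1 / 3 + (2 / 3) * (1 - χ ((f x₀ - f (x₀ - Δx)) / (f (x₀ + Δx) - f x₀)))) - 1 / 3)
      =O[nhdsWithin 0 (Set.Ioi 0)] (fun Δx : ℝ => Δx) ∧
    (fun Δx : ℝ =>
        (1 - (1 / 3 + (2 / 3) * (1 - χ ((f x₀ - f (x₀ - Δx)) / (f (x₀ + Δx) - f x₀))))) - 2 / 3)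
      =O[nhdsWithin 0 (Set.Ioi 0)] (fun Δx : ℝ => Δx) := by
  set L := nhdsWithin (0:ℝ) (Set.Ioi 0) with hL
  set c := deriv f x₀ with hc
  set r : ℝ → ℝ := fun Δx => (f x₀ - f (x₀ - Δx)) / (f (x₀ + Δx) - f x₀) with hr
  set D : ℝ → ℝ := fun Δx => f (x₀ + Δx) - f x₀ with hD
  set N : ℝ → ℝ := fun Δx => (f x₀ - f (x₀ - Δx)) - (f (x₀ + Δx) - f x₀) with hN
  have hfd : Differentiable ℝ f := hf.differentiable (by simp)
  -- N = O(Δx²)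
  have hNO : N =O[nhds 0] fun t : ℝ => t ^ 2 := by
    have hplus := taylor2_isBigO f hf x₀
    have hneg : Filter.Tendsto (fun t : ℝ => -t) (nhds (0:ℝ)) (nhds 0) := by
      simpa using (continuous_neg.tendsto (0:ℝ))
    have hminus : (fun t : ℝ => f (x₀ + -t) - f x₀ - c * (-t)) =O[nhds 0]
        fun t : ℝ => (-t) ^ 2 := hplus.comp_tendsto hneg
    have hminus' : (fun t : ℝ => f (x₀ - t) - f x₀ + c * t) =O[nhds 0]
        fun t : ℝ => t ^ 2 := by
      refine (hminus.congr ?_ ?_) <;> intro t <;> ring_nf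
    have hsum := hplus.add hminus'
    have : N = fun t => -((f (x₀ + t) - f x₀ - c * t) + (f (x₀ - t) - f x₀ + c * t)) := by
      funext t; simp only [hN]; ring
    rw [this]
    exact hsum.neg_left
  have hNOL : N =O[L] fun t : ℝ => t ^ 2 := hNO.mono nhdsWithin_le_nhds
  -- Δx = O(D)
  have htD : (fun t : ℝ => t) =O[L] D := by
    have h1 : (fun y : ℝ => y - x₀) =O[nhds x₀] fun y => f y - f x₀ :=
      (HasDerivAtFilter.isBigO_sub_rev (hfd x₀).hasDerivAt hf').comp_tendsto
        (tendsto_id.prodMk tendsto_const_pure)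
    have h2 : Filter.Tendsto (fun t : ℝ => x₀ + t) L (nhds x₀) := by
      have : Filter.Tendsto (fun t : ℝ => x₀ + t) (nhds 0) (nhds x₀) := by
        have : Filter.Tendsto (fun t : ℝ => x₀ + t) (nhds 0) (nhds (x₀ + 0)) :=
          tendsto_const_nhds.add tendsto_id
        simpa using this
      exact this.mono_left nhdsWithin_le_nhds
    have := h1.comp_tendsto h2
    simpa [hD, Function.comp_def] using this
  -- eventually t ≠ 0 and D t ≠ 0 on L
  have ht0 : ∀ᶠ t in L, t ≠ 0 := by
    filter_upwards [self_mem_nhdsWithin] with t ht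
    exact ne_of_gt ht
  have hD0 : ∀ᶠ t in L, D t ≠ 0 := by
    obtain ⟨C, hC⟩ := htD.bound
    filter_upwards [hC, ht0] with t hCt ht0t
    intro hDt
    rw [hDt] at hCt
    simp only [norm_zero, mul_zero, Real.norm_eq_abs] at hCt
    exact ht0t (abs_eq_zero.mp (le_antisymm hCt (abs_nonneg t)))
  -- D⁻¹ = O(t⁻¹)
  have hDinv : (fun t => (D t)⁻¹) =O[L] fun t : ℝ => t⁻¹ := by
    apply htD.inv_rev
    filter_upwards [ht0] with t ht ht'
    exact absurd ht' ht
  -- r - 1 = O(Δx)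
  have hr1 : (fun t => r t - 1) =O[L] fun t : ℝ => t := by
    have heq : (fun t => r t - 1) =ᶠ[L] fun t => N t * (D t)⁻¹ := by
      filter_upwards [hD0] with t hDt
      simp only [hr, hN, hD] at *
      field_simp
    have hmul : (fun t => N t * (D t)⁻¹) =O[L] fun t : ℝ => t ^ 2 * t⁻¹ :=
      hNOL.mul hDinv
    have heq2 : (fun t : ℝ => t ^ 2 * t⁻¹) =ᶠ[L] fun t : ℝ => t := by
      filter_upwards [ht0] with t ht
      field_simp
    calc (fun t => r t - 1) =O[L] fun t => N t * (D t)⁻¹ := heq.isBigO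
      _ =O[L] fun t : ℝ => t ^ 2 * t⁻¹ := hmul
      _ =O[L] fun t : ℝ => t := heq2.isBigO
  -- r → 1 along L
  have hrt : Filter.Tendsto r L (nhds 1) := by
    have h0 : Filter.Tendsto (fun t => r t - 1) L (nhds 0) := by
      apply hr1.trans_tendsto
      exact tendsto_nhdsWithin_of_tendsto_nhds tendsto_id
    have := h0.add_const 1
    simpa using this
  -- χ(r) - 1 = O(Δx)
  have hχO : (fun t => χ (r t) - 1) =O[L] fun t : ℝ => t := by
    have h1 : (fun y => χ y - χ 1) =O[nhds 1] fun y => y - 1 := hχd.isBigO_sub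
    have h2 := h1.comp_tendsto hrt
    rw [hχ1] at h2
    exact h2.trans hr1
  constructor
  · refine ((hχO.const_mul_left (-(2/3))).congr_left fun t => ?_)
    ring
  · refine ((hχO.const_mul_left (2/3)).congr_left fun t => ?_)
    ring
end

section
/- For the linear advection equation u_t + a u_x = 0 with a > 0, the forward-Euler scheme with centered flux uᵢⁿ⁺¹ = uᵢⁿ − aλ(ûᵢ₊₁/₂ − ûᵢ₋₁/₂) where ûᵢ₊₁/₂ = (uᵢ + uᵢ₊₁)/2 can be written as uᵢⁿ⁺¹ = uᵢⁿ − (aλ/2)(uᵢ₊₁ − uᵢ₋₁), and if the gradient ratio rᵢ = (uᵢ − uᵢ₋₁)/(uᵢ₊₁ − uᵢ) satisfies rᵢ ≥ aλ/(2 − aλ) with 0 < aλ ≤ 1, then uᵢⁿ⁺¹ can be expressed as a convex combination of uᵢⁿ and uᵢ₋₁ⁿ lying between min(uᵢ₋₁ⁿ, uᵢⁿ) and max(uᵢ₋₁ⁿ, uᵢⁿ) when uᵢ₊₁ − uᵢ ≠ 0. -/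
theorem centered_flux_nonoscillatory (a lam um u0 up : ℝ)
    (ha : 0 < a) (hlam : 0 < a * lam) (hcfl : a * lam ≤ 1)
    (hΔ : up - u0 ≠ 0)
    (hr : a * lam / (2 - a * lam) ≤ (u0 - um) / (up - u0)) :
    u0 - a * lam * ((u0 + up) / 2 - (um + u0) / 2)
      = u0 - (a * lam / 2) * (up - um) ∧
    u0 - (a * lam / 2) * (up - um) ∈ Set.Icc (min um u0) (max um u0) := by
  have h2 : (0:ℝ) < 2 - a * lam := by linarith
  refine ⟨by ring, ?_⟩
  rcases hΔ.lt_or_gt with hd | hd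
  · -- up - u0 < 0
    have key : (u0 - um) * (2 - a * lam) ≤ a * lam * (up - u0) := by
      have key := (le_div_iff_of_neg hd).mp hr
      rw [div_mul_eq_mul_div, le_div_iff₀ h2] at key
      linarith
    have hum : u0 ≤ um := by nlinarith
    have hmin : min um u0 = u0 := min_eq_right hum
    have hmax : max um u0 = um := max_eq_left hum
    rw [Set.mem_Icc, hmin, hmax]
    constructor <;> nlinarith
  · -- 0 < up - u0
    have key : a * lam * (up - u0) ≤ (u0 - um) * (2 - a * lam) := by
      have := (div_le_div_iff₀ h2 hd).mp hr
      linarith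
    have hum : um ≤ u0 := by nlinarith
    have hmin : min um u0 = um := min_eq_left hum
    have hmax : max um u0 = u0 := max_eq_right hum
    rw [Set.mem_Icc, hmin, hmax]
    constructor <;> nlinarith
end

section
/- For the linear advection equation with a > 0, the forward-Euler scheme with second-order upwind flux ûᵢ₊₁/₂ = (3/2)uᵢ − (1/2)uᵢ₋₁ reads uᵢⁿ⁺¹ = uᵢⁿ − aλ[(3/2)(uᵢ − uᵢ₋₁) − (1/2)(uᵢ₋₁ − uᵢ₋₂)]. If 0 < aλ ≤ 1/2 and the ratio rᵢ₋₁ = (uᵢ₋₁ − uᵢ₋₂)/(uᵢ − uᵢ₋₁) satisfies −(2 − 3aλ)/(aλ) ≤ rᵢ₋₁ < 3 (with uᵢ − uᵢ₋₁ ≠ 0), then uᵢⁿ⁺¹ lies between min(uᵢ₋₁ⁿ, uᵢⁿ) and max(uᵢ₋₁ⁿ, uᵢⁿ). -/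
/-!
Writing `r` for the ratio of consecutive differences, the update is
`u0 + θ (um - u0)` with `θ = aλ (3 - r) / 2`. The bound `r < 3` gives `θ > 0` and the lower
bound on `r` is exactly `θ ≤ 1`, so the new value is a convex combination of `um` and `u0`.
-/

open Set

lemma add_mul_sub_mem_uIcc {x y t : ℝ} (ht : t ∈ Icc 0 1) : x + t * (y - x) ∈ uIcc y x :=
  (convex_uIcc y x).add_smul_sub_mem right_mem_uIcc left_mem_uIcc ht

lemma upwind_update_eq_add_mul_sub {c r umm um u0 : ℝ} (hr : um - umm = r * (u0 - um)) :
    u0 - c * ((3 / 2) * (u0 - um) - (1 / 2) * (um - umm)) =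
      u0 + c * (3 - r) / 2 * (um - u0) := by
  rw [hr]
  ring

lemma upwind_coeff_mem_Icc {c r : ℝ} (hc : 0 < c) (hrl : -(2 - 3 * c) / c ≤ r) (hru : r < 3) :
    c * (3 - r) / 2 ∈ Icc 0 1 := by
  have hrc : -(2 - 3 * c) ≤ r * c := (div_le_iff₀ hc).mp hrl
  constructor <;> nlinarith

theorem upwind_flux_nonoscillatory_general (a lam umm um u0 : ℝ)
    (hlam : 0 < a * lam)
    (hΔ : u0 - um ≠ 0)
    (hrl : -(2 - 3 * (a * lam)) / (a * lam) ≤ (um - umm) / (u0 - um))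
    (hru : (um - umm) / (u0 - um) < 3) :
    u0 - a * lam * ((3 / 2) * (u0 - um) - (1 / 2) * (um - umm)) ∈
      Set.Icc (min um u0) (max um u0) := by
  rw [upwind_update_eq_add_mul_sub (div_mul_cancel₀ _ hΔ).symm]
  exact add_mul_sub_mem_uIcc (upwind_coeff_mem_Icc hlam hrl hru)

theorem upwind_flux_nonoscillatory (a lam umm um u0 : ℝ)
    (ha : 0 < a) (hlam : 0 < a * lam) (hcfl : a * lam ≤ 1 / 2)
    (hΔ : u0 - um ≠ 0)
    (hrl : -(2 - 3 * (a * lam)) / (a * lam) ≤ (um - umm) / (u0 - um))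
    (hru : (um - umm) / (u0 - um) < 3) :
    u0 - a * lam * ((3 / 2) * (u0 - um) - (1 / 2) * (um - umm)) ∈
      Set.Icc (min um u0) (max um u0) :=
  upwind_flux_nonoscillatory_general a lam umm um u0 hlam hΔ hrl hru
end
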